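/- Let G be a directed social network and let W* denote the maximum, over all bijections π : V → {1, …, |V|}, of the total forward edge weight Σ_{(i,j) : π(i) < π(j)} w_{ij} (i.e., the maximum weight of an acyclic subgraph of G). Then the maximum revenue of G satisfies R_max(G) ≥ (4/27)·W*. -/
import Mathlib


open Finset

/-- The revenue of a marketing strategy `(π, p)` on a directed social network. -/
noncomputable def drevenue {V : Type*} [Fintype V] [DecidableEq V]
    (w : V → V → ℝ) (π : V ≃ Fin (Fintype.card V)) (p : V → ℝ) : ℝ :=
  ∑ j, p j * (1 - p j) * ∑ i ∈ univ.filter (fun i => π i < π j), p i * w i j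

/-- The maximum revenue of a directed social network. -/
noncomputable def dmaxRev {V : Type*} [Fintype V] [DecidableEq V]
    (w : V → V → ℝ) : ℝ :=
  sSup {r | ∃ (π : V ≃ Fin (Fintype.card V)) (p : V → ℝ),
    (∀ i, 1/2 ≤ p i ∧ p i ≤ 1) ∧ r = drevenue w π p}

/-- The total weight of the edges going forward in the ordering `π`. -/
noncomputable def forwardWeight {V : Type*} [Fintype V] [DecidableEq V]
    (w : V → V → ℝ) (π : V ≃ Fin (Fintype.card V)) : ℝ :=
  ∑ j, ∑ i ∈ univ.filter (fun i => π i < π j), w i j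

/-- `W*`: the maximum weight of an acyclic subgraph, i.e. the maximum forward edge
weight over all orderings of the buyers. -/
noncomputable def maxAcyclic {V : Type*} [Fintype V] [DecidableEq V]
    (w : V → V → ℝ) : ℝ :=
  sSup {x | ∃ π : V ≃ Fin (Fintype.card V), x = forwardWeight w π}

lemma drevenue_twothirds {V : Type*} [Fintype V] [DecidableEq V]
    (w : V → V → ℝ) (π : V ≃ Fin (Fintype.card V)) :
    drevenue w π (fun _ => (2:ℝ)/3) = (4/27) * forwardWeight w π := by
  simp only [drevenue, forwardWeight, Finset.mul_sum]
  exact Finset.sum_congr rfl fun j _ =>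
    Finset.sum_congr rfl fun i _ => by ring

lemma drevenue_le {V : Type*} [Fintype V] [DecidableEq V]
    (w : V → V → ℝ) (hnonneg : ∀ i j, 0 ≤ w i j)
    (π : V ≃ Fin (Fintype.card V)) (p : V → ℝ)
    (hp : ∀ i, 1/2 ≤ p i ∧ p i ≤ 1) :
    drevenue w π p ≤ ∑ j, ∑ i, w i j := by
  apply Finset.sum_le_sum
  intro j _
  have h1 : 0 ≤ p j * (1 - p j) := by nlinarith [(hp j).1, (hp j).2]
  have h2 : p j * (1 - p j) ≤ 1 := by nlinarith [(hp j).1, (hp j).2]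
  calc p j * (1 - p j) * ∑ i ∈ univ.filter (fun i => π i < π j), p i * w i j
      ≤ 1 * ∑ i ∈ univ.filter (fun i => π i < π j), p i * w i j := by
        apply mul_le_mul_of_nonneg_right h2
        apply Finset.sum_nonneg
        intro i _
        exact mul_nonneg (by linarith [(hp i).1]) (hnonneg i j)
    _ = ∑ i ∈ univ.filter (fun i => π i < π j), p i * w i j := one_mul _
    _ ≤ ∑ i ∈ univ.filter (fun i => π i < π j), w i j := by
        apply Finset.sum_le_sum
        intro i _
        nlinarith [(hp i).1, (hp i).2, hnonneg i j]
    _ ≤ ∑ i, w i j := by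
        apply Finset.sum_le_sum_of_subset_of_nonneg (Finset.filter_subset _ _)
        intro i _ _
        exact hnonneg i j

/-- The maximum revenue of a directed social network is at least `4/27` times the
maximum weight of an acyclic subgraph. -/
theorem maxRev_ge_maxAcyclic
    {V : Type*} [Fintype V] [DecidableEq V] (w : V → V → ℝ)
    (hnonneg : ∀ i j, 0 ≤ w i j) (hself : ∀ i, w i i = 0) :
    dmaxRev w ≥ (4/27) * maxAcyclic w := by
  set T : Set ℝ := {x | ∃ π : V ≃ Fin (Fintype.card V), x = forwardWeight w π}
  have hfin : T.Finite := (Set.finite_range (forwardWeight w)).subset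
    (by rintro x ⟨π, rfl⟩; exact ⟨π, rfl⟩)
  have hne : T.Nonempty := by
    obtain ⟨π⟩ := Fintype.truncEquivFin V
    exact ⟨forwardWeight w π, π, rfl⟩
  have hmem : sSup T ∈ T := hne.csSup_mem hfin
  obtain ⟨π0, hπ0⟩ := hmem
  have hbdd : BddAbove {r | ∃ (π : V ≃ Fin (Fintype.card V)) (p : V → ℝ),
      (∀ i, 1/2 ≤ p i ∧ p i ≤ 1) ∧ r = drevenue w π p} := by
    refine ⟨∑ j, ∑ i, w i j, ?_⟩
    rintro r ⟨π, p, hp, rfl⟩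
    exact drevenue_le w hnonneg π p hp
  have hin : (4/27 : ℝ) * forwardWeight w π0 ∈
      {r | ∃ (π : V ≃ Fin (Fintype.card V)) (p : V → ℝ),
      (∀ i, 1/2 ≤ p i ∧ p i ≤ 1) ∧ r = drevenue w π p} :=
    ⟨π0, fun _ => (2:ℝ)/3, fun i => ⟨by norm_num, by norm_num⟩,
      (drevenue_twothirds w π0).symm⟩
  calc (4/27 : ℝ) * maxAcyclic w = (4/27) * forwardWeight w π0 := by
        rw [maxAcyclic]; rw [← hπ0]
    _ ≤ dmaxRev w := le_csSup hbdd hin
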